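/- Time-successor closure of regions with stopwatch rates: for any rate vector (r_x, r_y) ∈ {0,1}², if there exist ν in region R and t ≥ 0 with ν + (r_x·t, r_y·t) in region R', then for every ν' ∈ R there exists t' ≥ 0 with ν' + (r_x·t', r_y·t') ∈ R'. -/

import Mathlib

/-- Two coordinate values match: either both exceed `cmax`, or they have the
same integer part and their fractional parts are simultaneously zero. -/
def coordEq (cmax : ℕ) (a b : ℝ) : Prop :=
  ((cmax : ℝ) < a ∧ (cmax : ℝ) < b) ∨
    (⌊a⌋ = ⌊b⌋ ∧ (Int.fract a = 0 ↔ Int.fract b = 0))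

/-- Region equivalence on pairs of reals. -/
def regEquiv (cmax : ℕ) (v w : ℝ × ℝ) : Prop :=
  coordEq cmax v.1 w.1 ∧ coordEq cmax v.2 w.2 ∧
  ((v.1 ≤ (cmax : ℝ) ∧ v.2 ≤ (cmax : ℝ) ∧
      Int.fract v.1 ≠ 0 ∧ Int.fract v.2 ≠ 0) →
    ((Int.fract v.1 ≤ Int.fract v.2 ↔ Int.fract w.1 ≤ Int.fract w.2) ∧
     (Int.fract v.2 ≤ Int.fract v.1 ↔ Int.fract w.2 ≤ Int.fract w.1)))

/-!
Below `cmax`, region equivalence of `(x, y)` and `(x', y')` says exactly that `x`, `y` and `x - y`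
lie in the same cells as `x'`, `y'` and `x' - y'`, the cells of `ℝ` being the integers and the open
unit intervals. Flowing with rates `(1, 1)` translates `x` and `y` by `t` and fixes `x - y`; with
rates `(1, 0)` it translates `x` and `x - y` and fixes `y`. So it suffices that finitely many points
`c i`, `c' i` whose pairwise differences lie in the same cells can be translated by `t` and `t'`
so that `c i + t` and `c' i + t'` lie in the same cell for every `i`; adding the point `0` makes
`t'` nonnegative along with `t`. Coordinates above `cmax` stay above `cmax` under the flow.
-/

open Set

theorem exists_forall_between {ι α : Type*} [Finite ι] [LinearOrder α] [DenselyOrdered α]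
    [Nonempty α] {l u : ι → α} (h : ∀ i j, l i < u j) : ∃ x, ∀ i, l i < x ∧ x < u i := by
  cases isEmpty_or_nonempty ι
  · exact ⟨Classical.arbitrary α, isEmptyElim⟩
  obtain ⟨i, hi⟩ := Finite.exists_max l
  obtain ⟨j, hj⟩ := Finite.exists_min u
  obtain ⟨x, hix, hxj⟩ := exists_between (h i j)
  exact ⟨x, fun k => ⟨(hi k).trans_lt hix, hxj.trans_le (hj k)⟩⟩

/-- `x` and `y` lie in the same cell of the partition of `ℝ` into integers and open unit
intervals. -/
def SameCell (x y : ℝ) : Prop := ⌊x⌋ = ⌊y⌋ ∧ ⌈x⌉ = ⌈y⌉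

theorem ceil_eq_floor_iff_fract_eq_zero (x : ℝ) : ⌈x⌉ = ⌊x⌋ ↔ Int.fract x = 0 := by
  rw [Int.fract, sub_eq_zero]
  constructor
  · intro h
    exact le_antisymm (h ▸ Int.le_ceil x) (Int.floor_le x)
  · intro h
    rw [h, Int.ceil_intCast, Int.floor_intCast]

theorem sameCell_iff {x y : ℝ} :
    SameCell x y ↔ ⌊x⌋ = ⌊y⌋ ∧ (Int.fract x = 0 ↔ Int.fract y = 0) := by
  rw [SameCell, ← ceil_eq_floor_iff_fract_eq_zero, ← ceil_eq_floor_iff_fract_eq_zero]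
  refine and_congr_right fun hfloor => ?_
  have := Int.floor_le_ceil x
  have := Int.floor_le_ceil y
  have := Int.ceil_le_floor_add_one x
  have := Int.ceil_le_floor_add_one y
  omega

theorem sameCell_of_mem_Ioo {x y : ℝ} (n : ℤ) (hx : x ∈ Ioo (n : ℝ) (n + 1))
    (hy : y ∈ Ioo (n : ℝ) (n + 1)) : SameCell x y := by
  have floor_eq : ∀ z ∈ Ioo (n : ℝ) (n + 1), ⌊z⌋ = n := fun z hz =>
    Int.floor_eq_iff.2 ⟨hz.1.le, hz.2⟩
  have ceil_eq : ∀ z ∈ Ioo (n : ℝ) (n + 1), ⌈z⌉ = n + 1 := fun z hz =>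
    Int.ceil_eq_iff.2 ⟨by push_cast; linarith [hz.1], by push_cast; exact hz.2.le⟩
  exact ⟨(floor_eq x hx).trans (floor_eq y hy).symm, (ceil_eq x hx).trans (ceil_eq y hy).symm⟩

theorem sameCell_of_mem_Ioo_neg_one_one {x y : ℝ} (hx : x ∈ Ioo (-1 : ℝ) 1)
    (hy : y ∈ Ioo (-1 : ℝ) 1) (hle : x ≤ 0 ↔ y ≤ 0) (hge : 0 ≤ x ↔ 0 ≤ y) : SameCell x y := by
  have floor_eq : ∀ z ∈ Ioo (-1 : ℝ) 1, ⌊z⌋ = if 0 ≤ z then 0 else -1 := fun z hz => by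
    split_ifs <;> rw [Int.floor_eq_iff] <;> push_cast <;> constructor <;> linarith [hz.1, hz.2]
  have ceil_eq : ∀ z ∈ Ioo (-1 : ℝ) 1, ⌈z⌉ = if z ≤ 0 then 0 else 1 := fun z hz => by
    split_ifs <;> rw [Int.ceil_eq_iff] <;> push_cast <;> constructor <;> linarith [hz.1, hz.2]
  rw [SameCell, floor_eq x hx, floor_eq y hy, ceil_eq x hx, ceil_eq y hy]
  simp only [hle, hge, and_self]

namespace SameCell

variable {x y : ℝ}

theorem refl (x : ℝ) : SameCell x x := ⟨rfl, rfl⟩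

theorem neg (h : SameCell x y) : SameCell (-x) (-y) := by
  rw [SameCell, Int.floor_neg, Int.floor_neg, Int.ceil_neg, Int.ceil_neg, h.1, h.2]
  exact ⟨rfl, rfl⟩

theorem add_intCast (h : SameCell x y) (n : ℤ) : SameCell (x + n) (y + n) := by
  rw [SameCell, Int.floor_add_intCast, Int.floor_add_intCast, Int.ceil_add_intCast,
    Int.ceil_add_intCast, h.1, h.2]
  exact ⟨rfl, rfl⟩

theorem le_intCast_iff (h : SameCell x y) (n : ℤ) : x ≤ n ↔ y ≤ n := by
  rw [← Int.ceil_le, ← Int.ceil_le, h.2]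

theorem intCast_le_iff (h : SameCell x y) (n : ℤ) : n ≤ x ↔ n ≤ y := by
  rw [← Int.le_floor, ← Int.le_floor, h.1]

theorem lt_intCast_iff (h : SameCell x y) (n : ℤ) : x < n ↔ y < n := by
  rw [← Int.floor_lt, ← Int.floor_lt, h.1]

theorem intCast_lt_iff (h : SameCell x y) (n : ℤ) : n < x ↔ n < y := by
  rw [← Int.lt_ceil, ← Int.lt_ceil, h.2]

end SameCell

/-- If some translate `c i + t` is an integer `n`, take `t' = n - c' i`; otherwise every `c i + t`
lies strictly inside a unit interval and `t'` is any point of the corresponding (nonempty)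
intersection of open intervals. -/
theorem exists_forall_sameCell_add {ι : Type*} [Finite ι] (c c' : ι → ℝ)
    (hc : ∀ i j, SameCell (c i - c j) (c' i - c' j)) (t : ℝ) :
    ∃ t', ∀ i, SameCell (c i + t) (c' i + t') := by
  by_cases hint : ∃ i, ∃ n : ℤ, c i + t = n
  · obtain ⟨i₀, n, hn⟩ := hint
    refine ⟨n - c' i₀, fun i => ?_⟩
    have key := (hc i i₀).add_intCast n
    rwa [show c i - c i₀ + n = c i + t by linarith,
      show c' i - c' i₀ + n = c' i + (n - c' i₀) by ring] at key
  push Not at hint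
  set n : ι → ℤ := fun i => ⌊c i + t⌋
  have hlo : ∀ i, (n i : ℝ) < c i + t := fun i => (Int.floor_le _).lt_of_ne (hint i _).symm
  have hhi : ∀ i, c i + t < n i + 1 := fun i => Int.lt_floor_add_one _
  obtain ⟨t', ht'⟩ : ∃ t', ∀ i, n i - c' i < t' ∧ t' < n i + 1 - c' i := by
    refine exists_forall_between fun i j => ?_
    have hdiff : c j - c i < ((n j + 1 - n i : ℤ) : ℝ) := by
      push_cast
      linarith [hlo i, hhi j]
    have := ((hc j i).lt_intCast_iff _).1 hdiff
    push_cast at this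
    linarith
  exact ⟨t', fun i => sameCell_of_mem_Ioo (n i) ⟨hlo i, hhi i⟩
    ⟨by linarith [ht' i], by linarith [ht' i]⟩⟩

theorem exists_nonneg_sameCell_add_add {x x' z z' t : ℝ} (hx : SameCell x x')
    (hz : SameCell z z') (hxz : SameCell (x - z) (x' - z')) (ht : 0 ≤ t) :
    ∃ t', 0 ≤ t' ∧ SameCell (x + t) (x' + t') ∧ SameCell (z + t) (z' + t') := by
  have hzx : SameCell (z - x) (z' - x') := by simpa using hxz.neg
  obtain ⟨t', ht'⟩ := exists_forall_sameCell_add ![0, x, z] ![0, x', z'] (by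
    intro i j
    fin_cases i <;> fin_cases j <;> simp [SameCell.refl, hx, hz, hx.neg, hz.neg, hxz, hzx]) t
  have htt' : SameCell t t' := by simpa using ht' 0
  refine ⟨t', ?_, by simpa using ht' 1, by simpa using ht' 2⟩
  exact_mod_cast (htt'.intCast_le_iff 0).1 (by exact_mod_cast ht)

theorem exists_nonneg_sameCell_add {x x' t : ℝ} (hx : SameCell x x') (ht : 0 ≤ t) :
    ∃ t', 0 ≤ t' ∧ SameCell (x + t) (x' + t') := by
  obtain ⟨t', ht', hxt, -⟩ :=
    exists_nonneg_sameCell_add_add hx hx (by simpa using SameCell.refl 0) ht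
  exact ⟨t', ht', hxt⟩

section Regions

variable {cmax : ℕ}

theorem coordEq_iff {a b : ℝ} :
    coordEq cmax a b ↔ ((cmax : ℝ) < a ∧ (cmax : ℝ) < b) ∨ SameCell a b := by
  rw [coordEq, sameCell_iff]

theorem SameCell.coordEq {a b : ℝ} (h : SameCell a b) : coordEq cmax a b :=
  coordEq_iff.2 (Or.inr h)

theorem coordEq.sameCell {a b : ℝ} (h : coordEq cmax a b) (ha : a ≤ cmax) : SameCell a b :=
  (coordEq_iff.1 h).resolve_left fun h' => ha.not_gt h'.1

theorem coordEq.lt_of_lt {a b : ℝ} (h : coordEq cmax a b) (ha : (cmax : ℝ) < a) :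
    (cmax : ℝ) < b := by
  rcases coordEq_iff.1 h with h' | h'
  · exact h'.2
  · simpa using (h'.intCast_lt_iff cmax).1 (by simpa using ha)

theorem coordEq.exists_nonneg_add {a b t : ℝ} (h : coordEq cmax a b) (ht : 0 ≤ t) :
    ∃ t', 0 ≤ t' ∧ coordEq cmax (a + t) (b + t') := by
  rcases coordEq_iff.1 h with ⟨ha, hb⟩ | h'
  · exact ⟨0, le_rfl, Or.inl ⟨by linarith, by simpa using hb⟩⟩
  · obtain ⟨t', ht', hat⟩ := exists_nonneg_sameCell_add h' ht
    exact ⟨t', ht', hat.coordEq⟩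

theorem regEquiv.swap {x y x' y' : ℝ} (h : regEquiv cmax (x, y) (x', y')) :
    regEquiv cmax (y, x) (y', x') := by
  obtain ⟨hx, hy, hord⟩ := h
  exact ⟨hy, hx, fun ⟨h1, h2, h3, h4⟩ => (hord ⟨h2, h1, h4, h3⟩).symm⟩

theorem fract_le_fract_iff_sub_le {x y : ℝ} :
    Int.fract x ≤ Int.fract y ↔ x - y ≤ ⌊x⌋ - ⌊y⌋ := by
  rw [Int.fract, Int.fract]
  constructor <;> intro h <;> linarith

theorem fract_le_fract_iff_of_sameCell_sub {x y x' y' : ℝ} (h : SameCell (x - y) (x' - y'))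
    (hfl : ⌊x⌋ - ⌊y⌋ = ⌊x'⌋ - ⌊y'⌋) :
    Int.fract x ≤ Int.fract y ↔ Int.fract x' ≤ Int.fract y' := by
  rw [fract_le_fract_iff_sub_le, fract_le_fract_iff_sub_le]
  have := h.le_intCast_iff (⌊x⌋ - ⌊y⌋)
  nth_rw 2 [hfl] at this
  exact_mod_cast this

theorem regEquiv_of_sameCell_sub {x y x' y' : ℝ} (hx : coordEq cmax x x')
    (hy : coordEq cmax y y') (hxy : x ≤ cmax → y ≤ cmax → SameCell (x - y) (x' - y')) :
    regEquiv cmax (x, y) (x', y') := by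
  refine ⟨hx, hy, ?_⟩
  rintro ⟨hxc, hyc, -, -⟩
  have hd := hxy hxc hyc
  have hfl : ⌊x⌋ - ⌊y⌋ = ⌊x'⌋ - ⌊y'⌋ := by
    rw [(hx.sameCell hxc).1, (hy.sameCell hyc).1]
  exact ⟨fract_le_fract_iff_of_sameCell_sub hd hfl,
    fract_le_fract_iff_of_sameCell_sub (by simpa using hd.neg) (by dsimp only; omega)⟩

theorem le_iff_le_of_eq_zero_iff {a b a' b' : ℝ} (ha : 0 ≤ a) (hb : 0 ≤ b) (ha' : 0 ≤ a')
    (hb' : 0 ≤ b') (ha0 : a = 0 ↔ a' = 0) (hb0 : b = 0 ↔ b' = 0)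
    (h : a ≠ 0 → b ≠ 0 → (a ≤ b ↔ a' ≤ b')) : a ≤ b ↔ a' ≤ b' := by
  by_cases hza : a = 0
  · rw [ha0.1 hza, hza]
    exact iff_of_true hb hb'
  by_cases hzb : b = 0
  · have hza' : a' ≠ 0 := mt ha0.2 hza
    rw [hzb, hb0.1 hzb]
    exact iff_of_false (lt_of_le_of_ne ha (Ne.symm hza)).not_ge
      (lt_of_le_of_ne ha' (Ne.symm hza')).not_ge
  exact h hza hzb

theorem fract_sub_fract_mem_Ioo (x y : ℝ) : Int.fract x - Int.fract y ∈ Ioo (-1 : ℝ) 1 :=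
  ⟨by linarith [Int.fract_nonneg x, Int.fract_lt_one y],
    by linarith [Int.fract_nonneg y, Int.fract_lt_one x]⟩

theorem fract_sub_fract_add_floor_sub_floor (x y : ℝ) :
    Int.fract x - Int.fract y + ((⌊x⌋ - ⌊y⌋ : ℤ) : ℝ) = x - y := by
  push_cast
  rw [Int.fract, Int.fract]
  ring

theorem regEquiv.sameCell_sub {x y x' y' : ℝ} (h : regEquiv cmax (x, y) (x', y'))
    (hxc : x ≤ cmax) (hyc : y ≤ cmax) : SameCell (x - y) (x' - y') := by
  obtain ⟨hx, hy, hord⟩ := h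
  obtain ⟨hxfl, hx0⟩ := sameCell_iff.1 (hx.sameCell hxc)
  obtain ⟨hyfl, hy0⟩ := sameCell_iff.1 (hy.sameCell hyc)
  have hle := le_iff_le_of_eq_zero_iff (Int.fract_nonneg x) (Int.fract_nonneg y)
    (Int.fract_nonneg x') (Int.fract_nonneg y') hx0 hy0 fun h1 h2 => (hord ⟨hxc, hyc, h1, h2⟩).1
  have hge := le_iff_le_of_eq_zero_iff (Int.fract_nonneg y) (Int.fract_nonneg x)
    (Int.fract_nonneg y') (Int.fract_nonneg x') hy0 hx0 fun h1 h2 => (hord ⟨hxc, hyc, h2, h1⟩).2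
  have hfract : SameCell (Int.fract x - Int.fract y) (Int.fract x' - Int.fract y') :=
    sameCell_of_mem_Ioo_neg_one_one (fract_sub_fract_mem_Ioo x y) (fract_sub_fract_mem_Ioo x' y')
      (by rw [sub_nonpos, sub_nonpos, hle]) (by rw [sub_nonneg, sub_nonneg, hge])
  have := hfract.add_intCast (⌊x⌋ - ⌊y⌋)
  rwa [fract_sub_fract_add_floor_sub_floor, hxfl, hyfl, fract_sub_fract_add_floor_sub_floor] at this

theorem regEquiv.exists_nonneg_add_fst {x y x' y' t : ℝ} (h : regEquiv cmax (x, y) (x', y'))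
    (ht : 0 ≤ t) : ∃ t', 0 ≤ t' ∧ regEquiv cmax (x + t, y) (x' + t', y') := by
  have hx : coordEq cmax x x' := h.1
  have hy : coordEq cmax y y' := h.2.1
  by_cases hlow : x ≤ cmax ∧ y ≤ cmax
  · obtain ⟨t', ht', hxt, hdt⟩ := exists_nonneg_sameCell_add_add (hx.sameCell hlow.1)
      (h.sameCell_sub hlow.1 hlow.2) (by simpa using hy.sameCell hlow.2) ht
    refine ⟨t', ht', regEquiv_of_sameCell_sub hxt.coordEq hy fun _ _ => ?_⟩
    rwa [sub_add_eq_add_sub, sub_add_eq_add_sub] at hdt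
  · obtain ⟨t', ht', hxt⟩ := hx.exists_nonneg_add ht
    exact ⟨t', ht', regEquiv_of_sameCell_sub hxt hy fun hxc hyc =>
      absurd ⟨by linarith, hyc⟩ hlow⟩

theorem regEquiv.exists_nonneg_add_add_of_lt_snd {x y x' y' t : ℝ}
    (h : regEquiv cmax (x, y) (x', y')) (hy : (cmax : ℝ) < y) (ht : 0 ≤ t) :
    ∃ t', 0 ≤ t' ∧ regEquiv cmax (x + t, y + t) (x' + t', y' + t') := by
  obtain ⟨hx, hy', -⟩ := h
  have hy'c := hy'.lt_of_lt hy
  obtain ⟨t', ht', hxt⟩ := hx.exists_nonneg_add ht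
  exact ⟨t', ht', regEquiv_of_sameCell_sub hxt (Or.inl ⟨by linarith, by linarith⟩)
    fun _ hyc => absurd hyc (by linarith)⟩

theorem regEquiv.exists_nonneg_add_add {x y x' y' t : ℝ} (h : regEquiv cmax (x, y) (x', y'))
    (ht : 0 ≤ t) : ∃ t', 0 ≤ t' ∧ regEquiv cmax (x + t, y + t) (x' + t', y' + t') := by
  by_cases hyc : y ≤ cmax
  · by_cases hxc : x ≤ cmax
    · have hd := h.sameCell_sub hxc hyc
      obtain ⟨t', ht', hxt, hyt⟩ :=
        exists_nonneg_sameCell_add_add (h.1.sameCell hxc) (h.2.1.sameCell hyc) hd ht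
      refine ⟨t', ht', regEquiv_of_sameCell_sub hxt.coordEq hyt.coordEq fun _ _ => ?_⟩
      simpa only [add_sub_add_right_eq_sub] using hd
    · obtain ⟨t', ht', h'⟩ :=
        h.swap.exists_nonneg_add_add_of_lt_snd (not_le.1 hxc) ht
      exact ⟨t', ht', h'.swap⟩
  · exact h.exists_nonneg_add_add_of_lt_snd (not_le.1 hyc) ht

end Regions

theorem stmt_17_general (cmax : ℕ) (rx ry : ℝ)
    (hrx : rx ∈ ({0, 1} : Set ℝ)) (hry : ry ∈ ({0, 1} : Set ℝ))
    (ν ν' : ℝ × ℝ)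
    (h : regEquiv cmax ν ν') (t : ℝ) (ht : 0 ≤ t) :
    ∃ t' : ℝ, 0 ≤ t' ∧
      regEquiv cmax (ν.1 + rx * t, ν.2 + ry * t) (ν'.1 + rx * t', ν'.2 + ry * t') := by
  obtain ⟨x, y⟩ := ν
  obtain ⟨x', y'⟩ := ν'
  rcases hrx with rfl | rfl <;> rcases hry with rfl | rfl <;>
    simp only [zero_mul, one_mul, add_zero]
  · exact ⟨0, le_rfl, h⟩
  · obtain ⟨t', ht', h'⟩ := h.swap.exists_nonneg_add_fst ht
    exact ⟨t', ht', h'.swap⟩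
  · exact h.exists_nonneg_add_fst ht
  · exact h.exists_nonneg_add_add ht

/-- Time-successor closure of regions under stopwatch rates: for rates
`r_x, r_y ∈ {0,1}`, if some point of the region of `ν` flows in time `t` to
the region of `ν + (r_x·t, r_y·t)`, then every region-equivalent `ν'` flows
in some time `t'` to that same region. -/
theorem stmt_17 (cmax : ℕ) (rx ry : ℝ)
    (hrx : rx ∈ ({0, 1} : Set ℝ)) (hry : ry ∈ ({0, 1} : Set ℝ))
    (ν ν' : ℝ × ℝ) (hν : 0 ≤ ν.1 ∧ 0 ≤ ν.2) (hν' : 0 ≤ ν'.1 ∧ 0 ≤ ν'.2)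
    (h : regEquiv cmax ν ν') (t : ℝ) (ht : 0 ≤ t) :
    ∃ t' : ℝ, 0 ≤ t' ∧
      regEquiv cmax (ν.1 + rx * t, ν.2 + ry * t) (ν'.1 + rx * t', ν'.2 + ry * t') :=
  stmt_17_general cmax rx ry hrx hry ν ν' h t ht
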